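/- arXiv:2404.13339 — 2 statements merged into one kernel-verified Lean document; each statement's English description precedes it below -/
import Mathlib

section
/- The map t ↦ ‖y − X_t β̃_t‖₂ extends continuously to the closed cube: for every sequence t^(ℓ) ∈ (0,1)^J converging to t ∈ [0,1]^J, the limit lim_{ℓ→∞} ‖y − X_{t^(ℓ)} β̃_{t^(ℓ)}‖₂ exists and equals ‖y − X_t β̃_t‖₂, where β̃_t denotes a solution of L_t u = (1/n) X_t^T y. -/
open Matrix

/-- The group-structured diagonal matrix `T_t` repeating each `t j` over group `j`. -/
noncomputable def Tmat {p J : ℕ} (g : Fin p → Fin J) (t : Fin J → ℝ) :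
    Matrix (Fin p) (Fin p) ℝ :=
  Matrix.diagonal fun i => t (g i)

/-- `L_t = (1/n) X_tᵀ X_t + (I − T_t²)` with `X_t = X T_t`. -/
noncomputable def Lmat {n p J : ℕ} (X : Matrix (Fin n) (Fin p) ℝ)
    (g : Fin p → Fin J) (t : Fin J → ℝ) : Matrix (Fin p) (Fin p) ℝ :=
  ((1 : ℝ) / n) • ((X * Tmat g t)ᵀ * (X * Tmat g t)) +
    ((1 : Matrix (Fin p) (Fin p) ℝ) - Tmat g t * Tmat g t)

/-!
A solution `β` of `L_t β = (1/n) X_tᵀ y` is a critical point, hence a global minimiser, of the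
convex objective `Q_t(u) = ‖y - X_t u‖² + n uᵀ(I - T_t²)u`, and `Q_t(u) - Q_t(β) ≥ ‖X_t (u - β)‖²`.
So the fits `X_{tˡ} βˡ` converge to `X_t β_t` as soon as there are coefficients `vˡ` with
`X_t vˡ - X_{tˡ} βˡ → 0` and `Q_t(vˡ) ≤ Q_{tˡ}(βˡ) + o(1)`, because
`Q_{tˡ}(βˡ) ≤ Q_{tˡ}(β_t) → Q_t(β_t)`.
Take `vˡ = (tˡ / t) βˡ` where `t > 0` and `vˡ = 0` where `t = 0`. The bound `Q_{tˡ}(βˡ) ≤ ‖y‖²`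
controls `(1 - (tˡ)²) (βˡ)²`; this kills the contribution of the coordinates with `t = 0` to the fit
and makes the change of penalty vanish where `0 < t < 1`, while `vˡ` pays no penalty where `t = 1`.
-/

open Filter Topology

section RidgeObjective

variable {m ι : Type*} [Fintype m] [Fintype ι] (X : Matrix m ι ℝ) (y : m → ℝ) (c : ℝ)

/-- With `s = t ∘ g` and `c = n` this is `n` times the objective whose normal equations are
`L_t u = (1/n) X_tᵀ y` (see `isRidgeCritical_of_Lmat_mulVec`). -/
def ridgeObjective (s u : ι → ℝ) : ℝ :=
  ∑ a, (y - X *ᵥ (s * u)) a ^ 2 + c * ∑ i, (1 - s i ^ 2) * u i ^ 2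

def IsRidgeCritical (s β : ι → ℝ) : Prop :=
  ∀ i, s i * (Xᵀ *ᵥ (y - X *ᵥ (s * β))) i = c * ((1 - s i ^ 2) * β i)

variable {X y c}

theorem IsRidgeCritical.ridgeObjective_eq {s β : ι → ℝ} (hβ : IsRidgeCritical X y c s β)
    (u : ι → ℝ) :
    ridgeObjective X y c s u = ridgeObjective X y c s β
      + ∑ a, (X *ᵥ (s * (u - β))) a ^ 2 + c * ∑ i, (1 - s i ^ 2) * (u i - β i) ^ 2 := by
  set r := y - X *ᵥ (s * β)
  set e := X *ᵥ (s * (u - β))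
  have hres : y - X *ᵥ (s * u) = r - e := by
    simp only [r, e, mul_sub, mulVec_sub]; abel
  have hcross : ∑ a, r a * e a = c * ∑ i, (1 - s i ^ 2) * β i * (u i - β i) := by
    calc ∑ a, r a * e a = (Xᵀ *ᵥ r) ⬝ᵥ (s * (u - β)) := by
          rw [mulVec_transpose, ← dotProduct_mulVec]; rfl
      _ = c * ∑ i, (1 - s i ^ 2) * β i * (u i - β i) := by
          simp only [dotProduct, Finset.mul_sum]
          refine Finset.sum_congr rfl fun i _ => ?_
          simp only [Pi.mul_apply, Pi.sub_apply]
          linear_combination (u i - β i) * hβ i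
  have h1 : ∑ a, (r - e) a ^ 2 = ∑ a, r a ^ 2 - 2 * ∑ a, r a * e a + ∑ a, e a ^ 2 := by
    simp only [Pi.sub_apply, sub_sq, Finset.sum_add_distrib, Finset.sum_sub_distrib,
      Finset.mul_sum, mul_assoc]
  have h2 : ∑ i, (1 - s i ^ 2) * u i ^ 2 = ∑ i, (1 - s i ^ 2) * β i ^ 2
      + 2 * ∑ i, (1 - s i ^ 2) * β i * (u i - β i) + ∑ i, (1 - s i ^ 2) * (u i - β i) ^ 2 := by
    simp only [Finset.mul_sum, ← Finset.sum_add_distrib]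
    exact Finset.sum_congr rfl fun i _ => by ring
  rw [ridgeObjective, ridgeObjective, hres, h1, h2, hcross]
  ring

theorem IsRidgeCritical.ridgeObjective_add_le {s β : ι → ℝ} (hβ : IsRidgeCritical X y c s β)
    (hc : 0 ≤ c) (hs : ∀ i, s i ^ 2 ≤ 1) (u : ι → ℝ) :
    ridgeObjective X y c s β + ∑ a, (X *ᵥ (s * (u - β))) a ^ 2 ≤ ridgeObjective X y c s u := by
  rw [hβ.ridgeObjective_eq u, le_add_iff_nonneg_right]
  exact mul_nonneg hc <| Finset.sum_nonneg fun i _ =>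
    mul_nonneg (sub_nonneg.2 (hs i)) (sq_nonneg _)

theorem IsRidgeCritical.ridgeObjective_le {s β : ι → ℝ} (hβ : IsRidgeCritical X y c s β)
    (hc : 0 ≤ c) (hs : ∀ i, s i ^ 2 ≤ 1) (u : ι → ℝ) :
    ridgeObjective X y c s β ≤ ridgeObjective X y c s u :=
  (le_add_of_nonneg_right (Finset.sum_nonneg fun _ _ => sq_nonneg _)).trans
    (hβ.ridgeObjective_add_le hc hs u)

theorem IsRidgeCritical.ridgeObjective_le_sum_sq {s β : ι → ℝ} (hβ : IsRidgeCritical X y c s β)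
    (hc : 0 ≤ c) (hs : ∀ i, s i ^ 2 ≤ 1) : ridgeObjective X y c s β ≤ ∑ a, y a ^ 2 := by
  simpa [ridgeObjective] using hβ.ridgeObjective_le hc hs 0

theorem IsRidgeCritical.penalty_le {s β : ι → ℝ} (hβ : IsRidgeCritical X y c s β) (hc : 0 < c)
    (hs : ∀ i, s i ^ 2 ≤ 1) (i : ι) : (1 - s i ^ 2) * β i ^ 2 ≤ (∑ a, y a ^ 2) / c := by
  have hQ := hβ.ridgeObjective_le_sum_sq hc.le hs
  have hrss : 0 ≤ ∑ a, (y - X *ᵥ (s * β)) a ^ 2 := Finset.sum_nonneg fun _ _ => sq_nonneg _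
  have hi : (1 - s i ^ 2) * β i ^ 2 ≤ ∑ j, (1 - s j ^ 2) * β j ^ 2 :=
    Finset.single_le_sum (fun j _ => mul_nonneg (sub_nonneg.2 (hs j)) (sq_nonneg _))
      (Finset.mem_univ i)
  rw [le_div_iff₀ hc]
  unfold ridgeObjective at hQ
  nlinarith

theorem IsRidgeCritical.abs_residual_le {s β : ι → ℝ} (hβ : IsRidgeCritical X y c s β)
    (hc : 0 ≤ c) (hs : ∀ i, s i ^ 2 ≤ 1) (a : m) :
    |(y - X *ᵥ (s * β)) a| ≤ √(∑ b, y b ^ 2) := by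
  have hQ := hβ.ridgeObjective_le_sum_sq hc hs
  have hpen : 0 ≤ c * ∑ i, (1 - s i ^ 2) * β i ^ 2 :=
    mul_nonneg hc <| Finset.sum_nonneg fun i _ => mul_nonneg (sub_nonneg.2 (hs i)) (sq_nonneg _)
  have ha : (y - X *ᵥ (s * β)) a ^ 2 ≤ ∑ b, (y - X *ᵥ (s * β)) b ^ 2 :=
    Finset.single_le_sum (fun b _ => sq_nonneg ((y - X *ᵥ (s * β)) b)) (Finset.mem_univ a)
  unfold ridgeObjective at hQ
  exact Real.abs_le_sqrt (by linarith)

end RidgeObjective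

theorem tendsto_zero_of_approx_minimizers {α κ : Type*} {l : Filter κ} {Q D : α → ℝ}
    {Qs : κ → α → ℝ} {β : α} {βs v : κ → α} {ε : κ → ℝ}
    (hQ : ∀ u, Q β + D u ≤ Q u) (hD : ∀ u, 0 ≤ D u) (hmin : ∀ k, Qs k (βs k) ≤ Qs k β)
    (hQs : Tendsto (fun k => Qs k β) l (𝓝 (Q β)))
    (hv : ∀ k, Q (v k) ≤ Qs k (βs k) + ε k) (hε : Tendsto ε l (𝓝 0)) :
    Tendsto (fun k => D (v k)) l (𝓝 0) := by
  have hlim : Tendsto (fun k => Qs k β - Q β + ε k) l (𝓝 0) := by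
    simpa using (hQs.sub_const (Q β)).add hε
  refine squeeze_zero (fun k => hD _) (fun k => ?_) hlim
  linarith [hQ (v k), hmin k, hv k]

theorem tendsto_zero_of_sum_sq_tendsto_zero {κ m : Type*} [Fintype m] {l : Filter κ}
    {f : κ → m → ℝ} (h : Tendsto (fun k => ∑ a, f k a ^ 2) l (𝓝 0)) : Tendsto f l (𝓝 0) := by
  refine tendsto_pi_nhds.2 fun a => squeeze_zero_norm (fun k => Real.abs_le_sqrt
    (Finset.single_le_sum (fun b _ => sq_nonneg (f k b)) (Finset.mem_univ a))) ?_
  simpa [Function.comp_def] using (Real.continuous_sqrt.tendsto 0).comp h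

section Rescaling

variable {κ : Type*} {l : Filter κ}

theorem isBoundedUnder_norm_of_mul_sq_le {w b : κ → ℝ} {w₀ C : ℝ} (hw : Tendsto w l (𝓝 w₀))
    (hw₀ : 0 < w₀) (hb : ∀ k, w k * b k ^ 2 ≤ C) : IsBoundedUnder (· ≤ ·) l ((‖·‖) ∘ b) := by
  refine isBoundedUnder_of_eventually_le (a := √(2 * C / w₀)) ?_
  filter_upwards [hw.eventually (lt_mem_nhds (half_lt_self hw₀))] with k hk
  refine Real.abs_le_sqrt ((le_div_iff₀ hw₀).2 ?_)
  nlinarith [hb k, sq_nonneg (b k)]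

theorem tendsto_mul_zero_of_mul_sq_le {a b : κ → ℝ} {C : ℝ} (ha : Tendsto a l (𝓝 0))
    (hb : ∀ k, (1 - a k ^ 2) * b k ^ 2 ≤ C) : Tendsto (fun k => a k * b k) l (𝓝 0) := by
  have hw : Tendsto (fun k => 1 - a k ^ 2) l (𝓝 1) := by
    simpa using tendsto_const_nhds.sub (ha.pow 2)
  exact ha.zero_mul_isBoundedUnder_le (isBoundedUnder_norm_of_mul_sq_le hw one_pos hb)

noncomputable def rescaleCoef (s₀ s b : ℝ) : ℝ := if s₀ = 0 then 0 else s / s₀ * b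

theorem mul_rescaleCoef_add (s₀ s b : ℝ) :
    s₀ * rescaleCoef s₀ s b + (if s₀ = 0 then s * b else 0) = s * b := by
  unfold rescaleCoef
  split_ifs with h
  · simp
  · field_simp; ring

noncomputable def rescaleDefect {ι : Type*} (s₀ s β : ι → ℝ) : ι → ℝ :=
  fun i => if s₀ i = 0 then s i * β i else 0

theorem mul_rescaleCoef_add_rescaleDefect {ι : Type*} (s₀ s β : ι → ℝ) :
    s₀ * (fun i => rescaleCoef (s₀ i) (s i) (β i)) + rescaleDefect s₀ s β = s * β :=
  funext fun i => mul_rescaleCoef_add (s₀ i) (s i) (β i)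

theorem penalty_rescaleCoef_sub {s₀ : ℝ} (h : s₀ ≠ 0) (s b : ℝ) :
    (1 - s₀ ^ 2) * rescaleCoef s₀ s b ^ 2 - (1 - s ^ 2) * b ^ 2
      = b ^ 2 * ((s ^ 2 - s₀ ^ 2) / s₀ ^ 2) := by
  rw [rescaleCoef, if_neg h]
  field_simp
  ring

theorem tendsto_max_penalty_rescaleCoef_sub {s b : κ → ℝ} {s₀ C : ℝ} (hs : Tendsto s l (𝓝 s₀))
    (hs1 : ∀ k, s k ^ 2 ≤ 1) (hb : ∀ k, (1 - s k ^ 2) * b k ^ 2 ≤ C) :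
    Tendsto (fun k => max ((1 - s₀ ^ 2) * rescaleCoef s₀ (s k) (b k) ^ 2
      - (1 - s k ^ 2) * b k ^ 2) 0) l (𝓝 0) := by
  by_cases h0 : s₀ = 0
  · refine tendsto_const_nhds.congr fun k => (max_eq_right ?_).symm
    simp only [rescaleCoef, if_pos h0]
    nlinarith [hs1 k, sq_nonneg (b k)]
  simp only [penalty_rescaleCoef_sub h0]
  rcases lt_or_ge (s₀ ^ 2) 1 with h1 | h1
  · have hw : Tendsto (fun k => 1 - s k ^ 2) l (𝓝 (1 - s₀ ^ 2)) :=
      tendsto_const_nhds.sub (hs.pow 2)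
    have hbdd := isBoundedUnder_norm_of_mul_sq_le hw (by linarith) hb
    have hratio : Tendsto (fun k => (s k ^ 2 - s₀ ^ 2) / s₀ ^ 2) l (𝓝 0) := by
      have := ((hs.pow 2).sub_const (s₀ ^ 2)).div_const (s₀ ^ 2)
      rwa [sub_self, zero_div] at this
    have hexcess : Tendsto (fun k => b k ^ 2 * ((s k ^ 2 - s₀ ^ 2) / s₀ ^ 2)) l (𝓝 0) := by
      simpa [sq, mul_assoc] using
        isBoundedUnder_le_mul_tendsto_zero hbdd (isBoundedUnder_le_mul_tendsto_zero hbdd hratio)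
    simpa using hexcess.max (tendsto_const_nhds (x := (0 : ℝ)))
  · refine tendsto_const_nhds.congr fun k => (max_eq_right ?_).symm
    exact mul_nonpos_of_nonneg_of_nonpos (sq_nonneg _)
      (div_nonpos_of_nonpos_of_nonneg (by linarith [hs1 k]) (sq_nonneg _))

end Rescaling

section Competitor

variable {m ι : Type*} [Fintype m] [Fintype ι] (X : Matrix m ι ℝ) (y : m → ℝ) (c : ℝ)

noncomputable def rescaleExcess (s₀ s β : ι → ℝ) : ℝ :=
  ∑ a, ((X *ᵥ rescaleDefect s₀ s β) a ^ 2
      + 2 * (y - X *ᵥ (s * β)) a * (X *ᵥ rescaleDefect s₀ s β) a)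
    + c * ∑ i, max ((1 - s₀ i ^ 2) * rescaleCoef (s₀ i) (s i) (β i) ^ 2
      - (1 - s i ^ 2) * β i ^ 2) 0

variable {X y c}

theorem ridgeObjective_rescaleCoef_le (hc : 0 ≤ c) (s₀ s β : ι → ℝ) :
    ridgeObjective X y c s₀ (fun i => rescaleCoef (s₀ i) (s i) (β i)) ≤
      ridgeObjective X y c s β + rescaleExcess X y c s₀ s β := by
  set v := fun i => rescaleCoef (s₀ i) (s i) (β i)
  set e := X *ᵥ rescaleDefect s₀ s β
  have hres : y - X *ᵥ (s₀ * v) = (y - X *ᵥ (s * β)) + e := by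
    rw [← mul_rescaleCoef_add_rescaleDefect s₀ s β, mulVec_add]; abel
  have hrss : ∑ a, (y - X *ᵥ (s₀ * v)) a ^ 2 = ∑ a, (y - X *ᵥ (s * β)) a ^ 2
      + ∑ a, (e a ^ 2 + 2 * (y - X *ᵥ (s * β)) a * e a) := by
    rw [hres, ← Finset.sum_add_distrib]
    exact Finset.sum_congr rfl fun a _ => by simp only [Pi.add_apply]; ring
  have hpen : ∑ i, (1 - s₀ i ^ 2) * v i ^ 2 ≤ ∑ i, (1 - s i ^ 2) * β i ^ 2
      + ∑ i, max ((1 - s₀ i ^ 2) * v i ^ 2 - (1 - s i ^ 2) * β i ^ 2) 0 := by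
    rw [← Finset.sum_add_distrib]
    exact Finset.sum_le_sum fun i _ => by
      linarith [le_max_left ((1 - s₀ i ^ 2) * v i ^ 2 - (1 - s i ^ 2) * β i ^ 2) 0]
  unfold ridgeObjective rescaleExcess
  rw [hrss]
  nlinarith [mul_le_mul_of_nonneg_left hpen hc]

variable {κ : Type*} {l : Filter κ} {s : κ → ι → ℝ} {s₀ : ι → ℝ} {β : κ → ι → ℝ}

theorem tendsto_mulVec_rescaleDefect (hc : 0 < c) (hs : ∀ k i, s k i ^ 2 ≤ 1)
    (hlim : Tendsto s l (𝓝 s₀)) (hβ : ∀ k, IsRidgeCritical X y c (s k) (β k)) :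
    Tendsto (fun k => X *ᵥ rescaleDefect s₀ (s k) (β k)) l (𝓝 0) := by
  have hdefect : Tendsto (fun k => rescaleDefect s₀ (s k) (β k)) l (𝓝 0) :=
    tendsto_pi_nhds.2 fun i => by
      by_cases h0 : s₀ i = 0
      · simp only [rescaleDefect, if_pos h0]
        exact tendsto_mul_zero_of_mul_sq_le (h0 ▸ tendsto_pi_nhds.1 hlim i)
          fun k => (hβ k).penalty_le hc (hs k) i
      · simp only [rescaleDefect, if_neg h0]
        exact tendsto_const_nhds
  simpa [Function.comp_def] using
    ((show Continuous fun w : ι → ℝ => X *ᵥ w by fun_prop).tendsto 0).comp hdefect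

theorem tendsto_rescaleExcess (hc : 0 < c) (hs : ∀ k i, s k i ^ 2 ≤ 1)
    (hlim : Tendsto s l (𝓝 s₀)) (hβ : ∀ k, IsRidgeCritical X y c (s k) (β k)) :
    Tendsto (fun k => rescaleExcess X y c s₀ (s k) (β k)) l (𝓝 0) := by
  have hd := tendsto_pi_nhds.1 (tendsto_mulVec_rescaleDefect hc hs hlim hβ)
  have hres : ∀ a, IsBoundedUnder (· ≤ ·) l ((‖·‖) ∘ fun k => 2 * (y - X *ᵥ (s k * β k)) a) :=
    fun a => isBoundedUnder_of_eventually_le (a := 2 * √(∑ b, y b ^ 2)) <|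
      Eventually.of_forall fun k => by
        simpa [abs_mul] using (hβ k).abs_residual_le hc.le (hs k) a
  have hrss := tendsto_finsetSum Finset.univ fun a _ =>
    ((hd a).pow 2).add (isBoundedUnder_le_mul_tendsto_zero (hres a) (hd a))
  have hpen := tendsto_finsetSum Finset.univ fun i _ =>
    tendsto_max_penalty_rescaleCoef_sub (tendsto_pi_nhds.1 hlim i) (fun k => hs k i)
      (fun k => (hβ k).penalty_le hc (hs k) i)
  simpa [rescaleExcess] using hrss.add (hpen.const_mul c)

theorem tendsto_mulVec_mul_of_isRidgeCritical [l.NeBot] (hc : 0 < c) {β₀ : ι → ℝ}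
    (hs : ∀ k i, s k i ^ 2 ≤ 1) (hlim : Tendsto s l (𝓝 s₀))
    (hβ : ∀ k, IsRidgeCritical X y c (s k) (β k)) (hβ₀ : IsRidgeCritical X y c s₀ β₀) :
    Tendsto (fun k => X *ᵥ (s k * β k)) l (𝓝 (X *ᵥ (s₀ * β₀))) := by
  have hs₀ : ∀ i, s₀ i ^ 2 ≤ 1 := fun i =>
    le_of_tendsto' ((tendsto_pi_nhds.1 hlim i).pow 2) fun k => hs k i
  set v := fun k i => rescaleCoef (s₀ i) (s k i) (β k i)
  have hQ : Tendsto (fun k => ridgeObjective X y c (s k) β₀) l (𝓝 (ridgeObjective X y c s₀ β₀)) :=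
    ((show Continuous fun s => ridgeObjective X y c s β₀ by
      unfold ridgeObjective; fun_prop).tendsto s₀).comp hlim
  have hgap : Tendsto (fun k => X *ᵥ (s₀ * (v k - β₀))) l (𝓝 0) :=
    tendsto_zero_of_sum_sq_tendsto_zero <| tendsto_zero_of_approx_minimizers
      (Qs := fun k => ridgeObjective X y c (s k))
      (D := fun u => ∑ a, (X *ᵥ (s₀ * (u - β₀))) a ^ 2)
      (hβ₀.ridgeObjective_add_le hc.le hs₀) (fun u => Finset.sum_nonneg fun a _ => sq_nonneg _)
      (fun k => (hβ k).ridgeObjective_le hc.le (hs k) β₀) hQ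
      (fun k => ridgeObjective_rescaleCoef_le hc.le s₀ (s k) (β k))
      (tendsto_rescaleExcess hc hs hlim hβ)
  have hsplit : ∀ k, X *ᵥ (s k * β k)
      = X *ᵥ (s₀ * (v k - β₀)) + X *ᵥ (s₀ * β₀) + X *ᵥ rescaleDefect s₀ (s k) (β k) := by
    intro k
    rw [← mulVec_add, ← mulVec_add, ← mul_rescaleCoef_add_rescaleDefect s₀ (s k) (β k)]
    congr 1
    ring
  simpa [hsplit] using
    (hgap.add tendsto_const_nhds).add (tendsto_mulVec_rescaleDefect hc hs hlim hβ)

end Competitor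

section GroupScaling

variable {n p J : ℕ} (X : Matrix (Fin n) (Fin p) ℝ) (g : Fin p → Fin J) (t : Fin J → ℝ)
  (y : Fin n → ℝ)

theorem mulVec_Tmat (u : Fin p → ℝ) : Tmat g t *ᵥ u = (t ∘ g) * u :=
  funext fun i => mulVec_diagonal _ _ i

theorem mul_Tmat_mulVec (u : Fin p → ℝ) : (X * Tmat g t) *ᵥ u = X *ᵥ ((t ∘ g) * u) := by
  rw [← mulVec_mulVec, mulVec_Tmat]

theorem mul_Tmat_transpose_mulVec (z : Fin n → ℝ) :
    (X * Tmat g t)ᵀ *ᵥ z = (t ∘ g) * (Xᵀ *ᵥ z) := by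
  rw [transpose_mul, Tmat, diagonal_transpose, ← mulVec_mulVec, ← Tmat, mulVec_Tmat]

theorem isRidgeCritical_of_Lmat_mulVec (hn : n ≠ 0) {β : Fin p → ℝ}
    (h : Lmat X g t *ᵥ β = ((1 : ℝ) / n) • ((X * Tmat g t)ᵀ *ᵥ y)) :
    IsRidgeCritical X y n (t ∘ g) β := by
  intro i
  have hi := congrFun h i
  simp only [Lmat, add_mulVec, smul_mulVec, sub_mulVec, one_mulVec, ← mulVec_mulVec,
    mul_Tmat_transpose_mulVec, mulVec_Tmat, mulVec_sub, Pi.add_apply,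
    Pi.smul_apply, Pi.sub_apply, Pi.mul_apply, Function.comp_apply, smul_eq_mul] at hi ⊢
  have hn' : (n : ℝ) ≠ 0 := Nat.cast_ne_zero.2 hn
  field_simp at hi
  linear_combination -hi

end GroupScaling

theorem residual_norm_tendsto_general (n p J : ℕ) (hn : 0 < n)
    (X : Matrix (Fin n) (Fin p) ℝ) (g : Fin p → Fin J) (y : Fin n → ℝ)
    (tseq : ℕ → Fin J → ℝ) (htseq : ∀ ℓ j, tseq ℓ j ∈ Set.Ioo (0 : ℝ) 1)
    (t : Fin J → ℝ)
    (htend : Filter.Tendsto tseq Filter.atTop (nhds t))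
    (βseq : ℕ → Fin p → ℝ)
    (hβseq : ∀ ℓ, (Lmat X g (tseq ℓ)).mulVec (βseq ℓ) =
      ((1 : ℝ) / n) • ((X * Tmat g (tseq ℓ))ᵀ.mulVec y))
    (βt : Fin p → ℝ)
    (hβt : (Lmat X g t).mulVec βt = ((1 : ℝ) / n) • ((X * Tmat g t)ᵀ.mulVec y)) :
    Filter.Tendsto
      (fun ℓ => Real.sqrt (∑ a, (y a - (X * Tmat g (tseq ℓ)).mulVec (βseq ℓ) a) ^ 2))
      Filter.atTop
      (nhds (Real.sqrt (∑ a, (y a - (X * Tmat g t).mulVec βt a) ^ 2))) := by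
  have hs : ∀ ℓ i, (tseq ℓ ∘ g) i ^ 2 ≤ 1 := fun ℓ i => by
    obtain ⟨h0, h1⟩ := htseq ℓ (g i)
    simp only [Function.comp_apply]
    nlinarith
  have hlim : Tendsto (fun ℓ => tseq ℓ ∘ g) atTop (𝓝 (t ∘ g)) :=
    tendsto_pi_nhds.2 fun i => tendsto_pi_nhds.1 htend (g i)
  have hfit := tendsto_mulVec_mul_of_isRidgeCritical (Nat.cast_pos.2 hn) hs hlim
    (fun ℓ => isRidgeCritical_of_Lmat_mulVec X g _ y hn.ne' (hβseq ℓ))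
    (isRidgeCritical_of_Lmat_mulVec X g t y hn.ne' hβt)
  simp only [mul_Tmat_mulVec]
  exact ((show Continuous fun v : Fin n → ℝ => √(∑ a, (y a - v a) ^ 2) by
    fun_prop).tendsto _).comp hfit

/-- The map `t ↦ ‖y − X_t β̃_t‖₂` extends continuously to the closed cube: for every
sequence `t⁽ℓ⁾ ∈ (0,1)^J` converging to `t ∈ [0,1]^J`, the limit
`lim_ℓ ‖y − X_{t⁽ℓ⁾} β̃_{t⁽ℓ⁾}‖₂` exists and equals `‖y − X_t β̃_t‖₂`, where `β̃_t`
denotes a solution of `L_t u = (1/n) X_tᵀ y`. -/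
theorem residual_norm_tendsto (n p J : ℕ) (hn : 0 < n)
    (X : Matrix (Fin n) (Fin p) ℝ) (g : Fin p → Fin J) (y : Fin n → ℝ)
    (tseq : ℕ → Fin J → ℝ) (htseq : ∀ ℓ j, tseq ℓ j ∈ Set.Ioo (0 : ℝ) 1)
    (t : Fin J → ℝ) (ht : ∀ j, t j ∈ Set.Icc (0 : ℝ) 1)
    (htend : Filter.Tendsto tseq Filter.atTop (nhds t))
    (βseq : ℕ → Fin p → ℝ)
    (hβseq : ∀ ℓ, (Lmat X g (tseq ℓ)).mulVec (βseq ℓ) =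
      ((1 : ℝ) / n) • ((X * Tmat g (tseq ℓ))ᵀ.mulVec y))
    (βt : Fin p → ℝ)
    (hβt : (Lmat X g t).mulVec βt = ((1 : ℝ) / n) • ((X * Tmat g t)ᵀ.mulVec y)) :
    Filter.Tendsto
      (fun ℓ => Real.sqrt (∑ a, (y a - (X * Tmat g (tseq ℓ)).mulVec (βseq ℓ) a) ^ 2))
      Filter.atTop
      (nhds (Real.sqrt (∑ a, (y a - (X * Tmat g t).mulVec βt a) ^ 2))) :=
  residual_norm_tendsto_general n p J hn X g y tseq htseq t htend βseq hβseq βt hβt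
end

section
/- If L_t is invertible for t in the open cube and t^(ℓ) → s ∈ {0,1}^J with t^(ℓ) ∈ (0,1)^J, then the fitted values X_{t^(ℓ)} β̃_{t^(ℓ)} converge to the orthogonal projection of y onto the column space of X_{[s]} (equivalently, to X_{[s]} β̂_{[s]} for any least-squares solution β̂_{[s]}). -/
open Matrix Filter

/-- `β̃_t = L_t⁻¹ ((1/n) X_tᵀ y)`. -/
noncomputable def betaT {n p J : ℕ} (X : Matrix (Fin n) (Fin p) ℝ)
    (g : Fin p → Fin J) (y : Fin n → ℝ) (t : Fin J → ℝ) : Fin p → ℝ :=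
  (Lmat X g t)⁻¹.mulVec (((1 : ℝ) / n) • ((X * Tmat g t)ᵀ.mulVec y))

/-- `X_{[s]}`: the submatrix of columns in groups with `s j = 1`. -/
noncomputable def Xsub {n p J : ℕ} (X : Matrix (Fin n) (Fin p) ℝ)
    (g : Fin p → Fin J) (s : Fin J → ℝ) :
    Matrix (Fin n) {i : Fin p // s (g i) = 1} ℝ :=
  fun a i => X a i.1

section Aux

variable {n p J : ℕ}

private lemma zero_of_quad (q m : ℝ) (hm : 0 ≤ m)
    (h : ∀ ε : ℝ, 0 ≤ ε ^ 2 * m - 2 * ε * q) : q = 0 := by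
  have hm1 : (0:ℝ) < m + 1 := by linarith
  have h1 := h (q / (m + 1))
  have h2 : (q / (m+1)) ^ 2 * m - 2 * (q / (m+1)) * q
      = (q ^ 2 * m - 2 * q ^ 2 * (m + 1)) / (m + 1) ^ 2 := by
    field_simp
  rw [h2] at h1
  have h3 : 0 ≤ q ^ 2 * m - 2 * q ^ 2 * (m + 1) := by
    have := mul_nonneg h1 (sq_nonneg (m + 1))
    rwa [div_mul_cancel₀] at this
    positivity
  have h4 : q ^ 2 ≤ 0 := by nlinarith
  have h5 : q ^ 2 = 0 := le_antisymm h4 (sq_nonneg q)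
  exact pow_eq_zero_iff (by norm_num) |>.mp h5

private lemma sum_sub_sq (r x : Fin n → ℝ) (ε : ℝ) :
    ∑ a, (r a - ε * x a) ^ 2
      = ∑ a, (r a) ^ 2 - 2 * ε * (∑ a, x a * r a) + ε ^ 2 * ∑ a, (x a) ^ 2 := by
  rw [Finset.mul_sum, Finset.mul_sum, ← Finset.sum_sub_distrib, ← Finset.sum_add_distrib]
  exact Finset.sum_congr rfl fun a _ => by ring

private lemma dot_XdX (X : Matrix (Fin n) (Fin p) ℝ) (c : Fin p → ℝ) (v w : Fin n → ℝ) :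
    v ⬝ᵥ ((X * Matrix.diagonal c * Xᵀ) *ᵥ w)
      = ∑ i, c i * ((Xᵀ *ᵥ v) i) * ((Xᵀ *ᵥ w) i) := by
  rw [← Matrix.mulVec_mulVec, ← Matrix.mulVec_mulVec, Matrix.dotProduct_mulVec,
    ← Matrix.mulVec_transpose]
  simp only [dotProduct, Matrix.mulVec_diagonal]
  exact Finset.sum_congr rfl fun i _ => by ring

private lemma dot_G (X : Matrix (Fin n) (Fin p) ℝ) (c : Fin p → ℝ) (v w : Fin n → ℝ) :
    v ⬝ᵥ ((X * Matrix.diagonal c * Xᵀ + (n:ℝ) • (1 : Matrix (Fin n) (Fin n) ℝ)) *ᵥ w)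
      = (∑ i, c i * ((Xᵀ *ᵥ v) i) * ((Xᵀ *ᵥ w) i)) + (n:ℝ) * (v ⬝ᵥ w) := by
  rw [Matrix.add_mulVec, dotProduct_add, dot_XdX, Matrix.smul_mulVec,
    Matrix.one_mulVec, dotProduct_smul, smul_eq_mul]

private lemma G_unit (hn : 0 < n) (X : Matrix (Fin n) (Fin p) ℝ) (c : Fin p → ℝ)
    (hc : ∀ i, 0 ≤ c i) :
    IsUnit (X * Matrix.diagonal c * Xᵀ + (n:ℝ) • (1 : Matrix (Fin n) (Fin n) ℝ)).det := by
  rw [isUnit_iff_ne_zero]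
  intro h0
  obtain ⟨v, hv, hGv⟩ := Matrix.exists_mulVec_eq_zero_iff.mpr h0
  have h1 : v ⬝ᵥ ((X * Matrix.diagonal c * Xᵀ
      + (n:ℝ) • (1 : Matrix (Fin n) (Fin n) ℝ)) *ᵥ v) = 0 := by
    rw [hGv, dotProduct_zero]
  rw [dot_G] at h1
  have hsum1 : 0 ≤ ∑ i, c i * ((Xᵀ *ᵥ v) i) * ((Xᵀ *ᵥ v) i) :=
    Finset.sum_nonneg fun i _ => by
      rw [mul_assoc]
      exact mul_nonneg (hc i) (mul_self_nonneg _)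
  have hvpos : 0 < v ⬝ᵥ v := by
    obtain ⟨a, ha⟩ := Function.ne_iff.mp hv
    exact Finset.sum_pos' (fun b _ => mul_self_nonneg _)
      ⟨a, Finset.mem_univ a, mul_self_pos.mpr ha⟩
  have hnpos : (0:ℝ) < n := Nat.cast_pos.mpr hn
  nlinarith

private lemma fitted_eq (hn : 0 < n) (X : Matrix (Fin n) (Fin p) ℝ)
    (g : Fin p → Fin J) (y : Fin n → ℝ) (t : Fin J → ℝ)
    (ht : ∀ j, t j ∈ Set.Ioo (0:ℝ) 1) (hL : IsUnit (Lmat X g t)) :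
    (X * Tmat g t) *ᵥ betaT X g y t
      = y - (n:ℝ) • ((X * Matrix.diagonal (fun i => t (g i) ^ 2 / (1 - t (g i) ^ 2)) * Xᵀ
          + (n:ℝ) • (1 : Matrix (Fin n) (Fin n) ℝ))⁻¹ *ᵥ y) := by
  have hnR : ((n:ℝ)) ≠ 0 := Nat.cast_ne_zero.mpr hn.ne'
  have hne : ∀ i : Fin p, 1 - t (g i) ^ 2 ≠ 0 := fun i => by
    have h1 := (ht (g i)).1; have h2 := (ht (g i)).2; nlinarith
  set c : Fin p → ℝ := fun i => t (g i) ^ 2 / (1 - t (g i) ^ 2) with hc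
  set B : Matrix (Fin n) (Fin p) ℝ := X * Tmat g t with hB
  set K : Matrix (Fin n) (Fin n) ℝ := X * Matrix.diagonal c * Xᵀ with hK
  set G : Matrix (Fin n) (Fin n) ℝ := K + (n:ℝ) • (1 : Matrix (Fin n) (Fin n) ℝ) with hG
  set Dinv : Matrix (Fin p) (Fin p) ℝ :=
    Matrix.diagonal (fun i => (1 - t (g i) ^ 2)⁻¹) with hDinv
  set D : Matrix (Fin p) (Fin p) ℝ := Matrix.diagonal (fun i => 1 - t (g i) ^ 2) with hD
  have hKB : B * Dinv * Bᵀ = K := by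
    rw [hB, hK, hDinv, Matrix.transpose_mul, Tmat, Matrix.diagonal_transpose]
    have e0 : Matrix.diagonal (fun i => t (g i)) * Matrix.diagonal (fun i => (1 - t (g i) ^ 2)⁻¹)
        * Matrix.diagonal (fun i => t (g i)) = Matrix.diagonal c := by
      rw [Matrix.diagonal_mul_diagonal, Matrix.diagonal_mul_diagonal]
      exact congrArg Matrix.diagonal (funext fun i => by
        rw [hc]; field_simp)
    calc X * Matrix.diagonal (fun i => t (g i)) * Matrix.diagonal (fun i => (1 - t (g i) ^ 2)⁻¹)
          * (Matrix.diagonal (fun i => t (g i)) * Xᵀ)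
        = X * (Matrix.diagonal (fun i => t (g i)) * Matrix.diagonal (fun i => (1 - t (g i) ^ 2)⁻¹)
            * Matrix.diagonal (fun i => t (g i))) * Xᵀ := by
          simp only [Matrix.mul_assoc]
      _ = X * Matrix.diagonal c * Xᵀ := by rw [e0]
  have hDL : (1 : Matrix (Fin p) (Fin p) ℝ) - Tmat g t * Tmat g t = D := by
    rw [Tmat, hD, Matrix.diagonal_mul_diagonal, ← Matrix.diagonal_one, Matrix.diagonal_sub]
    exact congrArg Matrix.diagonal (funext fun i => by ring)
  have hnL : (n:ℝ) • Lmat X g t = Bᵀ * B + (n:ℝ) • D := by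
    rw [Lmat, smul_add, smul_smul, mul_one_div_cancel hnR, one_smul, hDL, hB]
  have hDDinv : D * Dinv = 1 := by
    rw [hD, hDinv, Matrix.diagonal_mul_diagonal, ← Matrix.diagonal_one]
    exact congrArg Matrix.diagonal (funext fun i => mul_inv_cancel₀ (hne i))
  have hBtG : Bᵀ * G = (n:ℝ) • (Lmat X g t * (Dinv * Bᵀ)) := by
    have expand : Bᵀ * G = Bᵀ * (B * (Dinv * Bᵀ)) + (n:ℝ) • Bᵀ := by
      rw [hG, Matrix.mul_add, Matrix.mul_smul, Matrix.mul_one, ← hKB]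
      simp only [Matrix.mul_assoc]
    have expand2 : (n:ℝ) • (Lmat X g t * (Dinv * Bᵀ))
        = Bᵀ * (B * (Dinv * Bᵀ)) + (n:ℝ) • Bᵀ := by
      rw [← Matrix.smul_mul, hnL, Matrix.add_mul, Matrix.smul_mul,
        ← Matrix.mul_assoc D Dinv, hDDinv, Matrix.one_mul]
      simp only [Matrix.mul_assoc]
    rw [expand, expand2]
  have hcnn : ∀ i, 0 ≤ c i := fun i => by
    have h1 := (ht (g i)).1; have h2 := (ht (g i)).2
    have hpos : 0 < 1 - t (g i) ^ 2 := by nlinarith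
    exact div_nonneg (sq_nonneg _) hpos.le
  have hGdet : IsUnit G.det := by rw [hG, hK]; exact G_unit hn X c hcnn
  have hLdet : IsUnit (Lmat X g t).det := (Matrix.isUnit_iff_isUnit_det _).mp hL
  have hGG : G * G⁻¹ = 1 := Matrix.mul_nonsing_inv _ hGdet
  have hGG' : G⁻¹ * G = 1 := Matrix.nonsing_inv_mul _ hGdet
  have main : B * (Lmat X g t)⁻¹ * (((1:ℝ)/n) • Bᵀ) = 1 - (n:ℝ) • G⁻¹ := by
    have hR : (1 - (n:ℝ) • G⁻¹) * G = K := by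
      rw [Matrix.sub_mul, Matrix.one_mul, Matrix.smul_mul, hGG', hG]
      abel
    have hLft : B * (Lmat X g t)⁻¹ * (((1:ℝ)/n) • Bᵀ) * G = K := by
      rw [Matrix.mul_assoc (B * (Lmat X g t)⁻¹), Matrix.smul_mul, hBtG, smul_smul,
        one_div, inv_mul_cancel₀ hnR, one_smul, ← Matrix.mul_assoc,
        Matrix.mul_assoc B, Matrix.nonsing_inv_mul _ hLdet, Matrix.mul_one,
        ← Matrix.mul_assoc, hKB]
    calc B * (Lmat X g t)⁻¹ * (((1:ℝ)/n) • Bᵀ)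
        = B * (Lmat X g t)⁻¹ * (((1:ℝ)/n) • Bᵀ) * (G * G⁻¹) := by rw [hGG, Matrix.mul_one]
      _ = (B * (Lmat X g t)⁻¹ * (((1:ℝ)/n) • Bᵀ) * G) * G⁻¹ := by
          simp only [Matrix.mul_assoc]
      _ = K * G⁻¹ := by rw [hLft]
      _ = ((1 - (n:ℝ) • G⁻¹) * G) * G⁻¹ := by rw [hR]
      _ = (1 - (n:ℝ) • G⁻¹) * (G * G⁻¹) := by rw [Matrix.mul_assoc]
      _ = 1 - (n:ℝ) • G⁻¹ := by rw [hGG, Matrix.mul_one]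
  have hfin : B *ᵥ betaT X g y t = (B * (Lmat X g t)⁻¹ * (((1:ℝ)/n) • Bᵀ)) *ᵥ y := by
    rw [betaT, ← hB, ← Matrix.smul_mulVec, Matrix.mulVec_mulVec, Matrix.mulVec_mulVec]
  rw [hfin, main, Matrix.sub_mulVec, Matrix.one_mulVec, Matrix.smul_mulVec]

end Aux

set_option maxHeartbeats 1600000 in
/-- If `L_t` is invertible for `t` in the open cube and `t⁽ℓ⁾ → s ∈ {0,1}^J` with
`t⁽ℓ⁾ ∈ (0,1)^J`, then the fitted values `X_{t⁽ℓ⁾} β̃_{t⁽ℓ⁾}` converge to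
`X_{[s]} β̂_{[s]}` for any least-squares solution `β̂_{[s]}` (the orthogonal projection
of `y` onto the column space of `X_{[s]}`). -/
theorem fitted_values_tendsto_projection (n p J : ℕ) (hn : 0 < n)
    (X : Matrix (Fin n) (Fin p) ℝ) (g : Fin p → Fin J) (y : Fin n → ℝ)
    (hL : ∀ t : Fin J → ℝ, (∀ j, t j ∈ Set.Ioo (0 : ℝ) 1) → IsUnit (Lmat X g t))
    (s : Fin J → ℝ) (hs : ∀ j, s j = 0 ∨ s j = 1)
    (tseq : ℕ → Fin J → ℝ) (htseq : ∀ ℓ j, tseq ℓ j ∈ Set.Ioo (0 : ℝ) 1)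
    (htend : Filter.Tendsto tseq Filter.atTop (nhds s))
    (βhat : {i : Fin p // s (g i) = 1} → ℝ)
    (hβhat : ∀ β : {i : Fin p // s (g i) = 1} → ℝ,
      ∑ a, (y a - (Xsub X g s).mulVec βhat a) ^ 2 ≤
        ∑ a, (y a - (Xsub X g s).mulVec β a) ^ 2) :
    Filter.Tendsto
      (fun ℓ => (X * Tmat g (tseq ℓ)).mulVec (betaT X g y (tseq ℓ)))
      Filter.atTop (nhds ((Xsub X g s).mulVec βhat)) := by
  classical
  have hnpos : (0:ℝ) < n := Nat.cast_pos.mpr hn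
  have hnR : ((n:ℝ)) ≠ 0 := hnpos.ne'
  have hn1 : (1:ℝ) ≤ (n:ℝ) := by exact_mod_cast hn
  set A : Matrix (Fin n) {i : Fin p // s (g i) = 1} ℝ := Xsub X g s with hA
  set r : Fin n → ℝ := y - A *ᵥ βhat with hr
  set ρ : Fin p → ℝ := Xᵀ *ᵥ r with hρ
  set b : Fin p → ℝ := fun i => if h : s (g i) = 1 then βhat ⟨i, h⟩ else 0 with hb
  have hra : ∀ a, r a = y a - (A *ᵥ βhat) a := fun a => by rw [hr]; rfl
  -- normal equations
  have hNE : ∀ i : Fin p, s (g i) = 1 → ρ i = 0 := by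
    intro i hi
    have hρi : ρ i = ∑ a, X a i * r a := by
      rw [hρ]
      simp [Matrix.mulVec, dotProduct, Matrix.transpose_apply]
    have hm : (0:ℝ) ≤ ∑ a, (X a i)^2 := Finset.sum_nonneg fun a _ => sq_nonneg _
    rw [hρi]
    apply zero_of_quad _ _ hm
    intro ε
    set β' : {i : Fin p // s (g i) = 1} → ℝ :=
      fun j => βhat j + ε * (if j = (⟨i, hi⟩ : {i : Fin p // s (g i) = 1}) then 1 else 0)
      with hβ'
    have h := hβhat β'
    have hAv : ∀ a, (A *ᵥ β') a = (A *ᵥ βhat) a + ε * X a i := by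
      intro a
      show ∑ j, A a j * β' j = (∑ j, A a j * βhat j) + ε * X a i
      have hterm : ∀ j, A a j * β' j
          = A a j * βhat j
            + (if j = (⟨i, hi⟩ : {i : Fin p // s (g i) = 1}) then ε * A a j else 0) := by
        intro j
        rw [hβ']
        by_cases hj : j = (⟨i, hi⟩ : {i : Fin p // s (g i) = 1}) <;> simp [hj] <;> ring
      rw [Finset.sum_congr rfl (fun j _ => hterm j), Finset.sum_add_distrib,
        Finset.sum_ite_eq' Finset.univ]
      simp only [Finset.mem_univ, if_true]
      have : A a (⟨i, hi⟩ : {i : Fin p // s (g i) = 1}) = X a i := rfl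
      rw [this]
    have e1 : ∀ a, y a - (A *ᵥ β') a = r a - ε * X a i := by
      intro a
      rw [hAv a, hra a]
      ring
    have e2 : (∑ a, (y a - (A *ᵥ β') a) ^ 2) = ∑ a, (r a - ε * X a i) ^ 2 :=
      Finset.sum_congr rfl fun a _ => by rw [e1 a]
    have e3 : (∑ a, (y a - (A *ᵥ βhat) a) ^ 2) = ∑ a, (r a) ^ 2 :=
      Finset.sum_congr rfl fun a _ => by rw [hra a]
    rw [e2, e3, sum_sub_sq] at h
    linarith
  -- X *ᵥ b = A *ᵥ βhat
  have hXb : X *ᵥ b = A *ᵥ βhat := by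
    funext a
    show ∑ i, X a i * b i = ∑ i, A a i * βhat i
    rw [← Fintype.sum_subtype_add_sum_subtype (fun i => s (g i) = 1) (fun i => X a i * b i)]
    have h2 : (∑ i : {x : Fin p // ¬ s (g x) = 1}, X a i.1 * b i.1) = 0 :=
      Finset.sum_eq_zero fun i _ => by
        have : b i.1 = 0 := by rw [hb]; exact dif_neg i.2
        rw [this, mul_zero]
    rw [h2, add_zero]
    apply Finset.sum_congr rfl
    intro i _
    have : b i.1 = βhat i := by
      show (if h : s (g i.1) = 1 then βhat ⟨i.1, h⟩ else 0) = βhat i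
      rw [dif_pos i.2]
    rw [this]
    rfl
  -- sequences
  set c : ℕ → Fin p → ℝ := fun ℓ i => tseq ℓ (g i) ^ 2 / (1 - tseq ℓ (g i) ^ 2) with hcdef
  set q : ℕ → Fin p → ℝ := fun ℓ i => (1 - tseq ℓ (g i) ^ 2) / tseq ℓ (g i) ^ 2 with hqdef
  have htpos : ∀ ℓ (i : Fin p), 0 < tseq ℓ (g i) ^ 2 := fun ℓ i => pow_pos (htseq ℓ (g i)).1 2
  have ht1 : ∀ ℓ (i : Fin p), 0 < 1 - tseq ℓ (g i) ^ 2 := fun ℓ i => by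
    have h1 := (htseq ℓ (g i)).1; have h2 := (htseq ℓ (g i)).2; nlinarith
  have hcpos : ∀ ℓ i, 0 < c ℓ i := fun ℓ i => div_pos (htpos ℓ i) (ht1 ℓ i)
  have hqpos : ∀ ℓ i, 0 < q ℓ i := fun ℓ i => div_pos (ht1 ℓ i) (htpos ℓ i)
  have hcq : ∀ ℓ i, c ℓ i * q ℓ i = 1 := fun ℓ i => by
    have h1 := htpos ℓ i
    have h2 := ht1 ℓ i
    rw [hcdef, hqdef]
    show tseq ℓ (g i) ^ 2 / (1 - tseq ℓ (g i) ^ 2)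
        * ((1 - tseq ℓ (g i) ^ 2) / tseq ℓ (g i) ^ 2) = 1
    rw [div_mul_div_comm, mul_comm]
    exact div_self (ne_of_gt (mul_pos h2 h1))
  set K : ℕ → Matrix (Fin n) (Fin n) ℝ := fun ℓ => X * Matrix.diagonal (c ℓ) * Xᵀ with hKdef
  set G : ℕ → Matrix (Fin n) (Fin n) ℝ :=
    fun ℓ => K ℓ + (n:ℝ) • (1 : Matrix (Fin n) (Fin n) ℝ) with hGdef
  set z : ℕ → Fin n → ℝ := fun ℓ => (G ℓ)⁻¹ *ᵥ y with hzdef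
  set w : ℕ → Fin n → ℝ := fun ℓ => z ℓ - ((1:ℝ)/n) • r with hwdef
  set u : ℕ → Fin p → ℝ := fun ℓ => Xᵀ *ᵥ w ℓ with hudef
  have hGexp : ∀ ℓ, G ℓ = X * Matrix.diagonal (c ℓ) * Xᵀ
      + (n:ℝ) • (1 : Matrix (Fin n) (Fin n) ℝ) := fun ℓ => by rw [hGdef, hKdef]
  have hGdet : ∀ ℓ, IsUnit (G ℓ).det := fun ℓ => by
    rw [hGexp ℓ]; exact G_unit hn X (c ℓ) (fun i => (hcpos ℓ i).le)
  have hGz : ∀ ℓ, G ℓ *ᵥ z ℓ = y := fun ℓ => by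
    rw [hzdef]
    show G ℓ *ᵥ ((G ℓ)⁻¹ *ᵥ y) = y
    rw [Matrix.mulVec_mulVec, Matrix.mul_nonsing_inv _ (hGdet ℓ), Matrix.one_mulVec]
  have hyr : y - r = A *ᵥ βhat := by rw [hr]; abel
  have hGw : ∀ ℓ, G ℓ *ᵥ w ℓ = X *ᵥ b - ((1:ℝ)/n) • (K ℓ *ᵥ r) := by
    intro ℓ
    have h1 : G ℓ *ᵥ r = K ℓ *ᵥ r + (n:ℝ) • r := by
      rw [hGdef]
      show (K ℓ + (n:ℝ) • (1 : Matrix (Fin n) (Fin n) ℝ)) *ᵥ r = K ℓ *ᵥ r + (n:ℝ) • r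
      rw [Matrix.add_mulVec, Matrix.smul_mulVec, Matrix.one_mulVec]
    have h2 : G ℓ *ᵥ w ℓ = G ℓ *ᵥ z ℓ - ((1:ℝ)/n) • (G ℓ *ᵥ r) := by
      rw [hwdef]
      show G ℓ *ᵥ (z ℓ - ((1:ℝ)/n) • r) = _
      rw [Matrix.mulVec_sub, Matrix.mulVec_smul]
    rw [h2, hGz ℓ, h1, smul_add, smul_smul, one_div, inv_mul_cancel₀ hnR, one_smul, hXb,
      ← hyr]
    abel
  -- key scalar identity
  have key : ∀ ℓ, (∑ i, c ℓ i * u ℓ i * u ℓ i) + (n:ℝ) * (w ℓ ⬝ᵥ w ℓ)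
      = (∑ i, u ℓ i * b i) - ((1:ℝ)/n) * (∑ i, c ℓ i * u ℓ i * ρ i) := by
    intro ℓ
    have e : w ℓ ⬝ᵥ (G ℓ *ᵥ w ℓ) = w ℓ ⬝ᵥ (X *ᵥ b) - ((1:ℝ)/n) * (w ℓ ⬝ᵥ (K ℓ *ᵥ r)) := by
      rw [hGw ℓ, dotProduct_sub, dotProduct_smul, smul_eq_mul]
    rw [hGexp ℓ, dot_G] at e
    have eK : w ℓ ⬝ᵥ (K ℓ *ᵥ r) = ∑ i, c ℓ i * u ℓ i * ρ i := by
      show w ℓ ⬝ᵥ ((X * Matrix.diagonal (c ℓ) * Xᵀ) *ᵥ r) = ∑ i, c ℓ i * u ℓ i * ρ i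
      rw [dot_XdX]
    have eb : w ℓ ⬝ᵥ (X *ᵥ b) = ∑ i, u ℓ i * b i := by
      rw [Matrix.dotProduct_mulVec, ← Matrix.mulVec_transpose]
      rfl
    rw [eK, eb] at e
    rw [← e]
  -- bounds
  have hzb : ∀ ℓ, ∑ a, (z ℓ a) ^ 2 ≤ ∑ a, (y a) ^ 2 := by
    intro ℓ
    have e : z ℓ ⬝ᵥ (G ℓ *ᵥ z ℓ) = z ℓ ⬝ᵥ y := by rw [hGz ℓ]
    rw [hGexp ℓ, dot_G] at e
    have h1 : 0 ≤ ∑ i, c ℓ i * ((Xᵀ *ᵥ z ℓ) i) * ((Xᵀ *ᵥ z ℓ) i) :=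
      Finset.sum_nonneg fun i _ => by
        rw [mul_assoc]; exact mul_nonneg (hcpos ℓ i).le (mul_self_nonneg _)
    have h3 : z ℓ ⬝ᵥ z ℓ = ∑ a, (z ℓ a) ^ 2 := by
      simp [dotProduct, sq]
    have h2 : z ℓ ⬝ᵥ y ≤ (1/2) * (∑ a, (z ℓ a) ^ 2) + (1/2) * (∑ a, (y a) ^ 2) := by
      simp only [dotProduct]
      rw [Finset.mul_sum, Finset.mul_sum, ← Finset.sum_add_distrib]
      apply Finset.sum_le_sum
      intro a _
      nlinarith [sq_nonneg (z ℓ a - y a)]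
    have hS : 0 ≤ ∑ a, (z ℓ a) ^ 2 := Finset.sum_nonneg fun a _ => sq_nonneg _
    rw [h3] at e
    nlinarith
  have hwb : ∀ ℓ, ∑ a, (w ℓ a) ^ 2
      ≤ 2 * (∑ a, (y a) ^ 2) + 2 * (∑ a, (((1:ℝ)/n) * r a) ^ 2) := by
    intro ℓ
    have hwz : ∀ a, w ℓ a = z ℓ a - ((1:ℝ)/n) * r a := fun a => by
      rw [hwdef]; rfl
    have step : ∑ a, (w ℓ a) ^ 2
        ≤ ∑ a, (2 * (z ℓ a) ^ 2 + 2 * (((1:ℝ)/n) * r a) ^ 2) := by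
      apply Finset.sum_le_sum
      intro a _
      rw [hwz a]
      nlinarith [sq_nonneg (z ℓ a + ((1:ℝ)/n) * r a)]
    rw [Finset.sum_add_distrib, ← Finset.mul_sum, ← Finset.mul_sum] at step
    have := hzb ℓ
    nlinarith
  obtain ⟨M, hM⟩ : ∃ M : Fin p → ℝ, ∀ ℓ i, |u ℓ i| ≤ M i := by
    refine ⟨fun i => (1 + (∑ a, (X a i) ^ 2)
      * (2 * (∑ a, (y a) ^ 2) + 2 * (∑ a, (((1:ℝ)/n) * r a) ^ 2))) / 2, fun ℓ i => ?_⟩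
    have hui : u ℓ i = ∑ a, X a i * w ℓ a := by
      rw [hudef]
      simp [Matrix.mulVec, dotProduct, Matrix.transpose_apply]
    have hub : (u ℓ i) ^ 2 ≤ (∑ a, (X a i) ^ 2)
        * (2 * (∑ a, (y a) ^ 2) + 2 * (∑ a, (((1:ℝ)/n) * r a) ^ 2)) := by
      calc (u ℓ i) ^ 2 = (∑ a, X a i * w ℓ a) ^ 2 := by rw [hui]
        _ ≤ (∑ a, (X a i) ^ 2) * (∑ a, (w ℓ a) ^ 2) :=
            Finset.sum_mul_sq_le_sq_mul_sq Finset.univ _ _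
        _ ≤ _ := mul_le_mul_of_nonneg_left (hwb ℓ)
            (Finset.sum_nonneg fun a _ => sq_nonneg _)
    nlinarith [sq_nonneg (|u ℓ i| - 1), sq_abs (u ℓ i), hub]
  -- main inequality
  set ψ1 : ℕ → ℝ := fun ℓ => ∑ i, (b i) ^ 2 / 4 * q ℓ i with hψ1def
  set ψ2 : ℕ → ℝ := fun ℓ => ∑ i, (c ℓ i * |ρ i|) * M i with hψ2def
  have hmain : ∀ ℓ, (n:ℝ) * (∑ a, (w ℓ a) ^ 2) ≤ ψ1 ℓ + ψ2 ℓ := by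
    intro ℓ
    have hww : w ℓ ⬝ᵥ w ℓ = ∑ a, (w ℓ a) ^ 2 := by simp [dotProduct, sq]
    have k := key ℓ
    rw [hww] at k
    have piece1 : (∑ i, u ℓ i * b i) - (∑ i, c ℓ i * u ℓ i * u ℓ i) ≤ ψ1 ℓ := by
      rw [hψ1def, ← Finset.sum_sub_distrib]
      apply Finset.sum_le_sum
      intro i _
      nlinarith [mul_nonneg (sq_nonneg (b i - 2 * c ℓ i * u ℓ i)) (hqpos ℓ i).le,
        hcq ℓ i, (hcpos ℓ i), (hqpos ℓ i)]
    have piece2 : -(((1:ℝ)/n) * (∑ i, c ℓ i * u ℓ i * ρ i)) ≤ ψ2 ℓ := by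
      have habs : |∑ i, c ℓ i * u ℓ i * ρ i| ≤ ψ2 ℓ := by
        calc |∑ i, c ℓ i * u ℓ i * ρ i| ≤ ∑ i, |c ℓ i * u ℓ i * ρ i| :=
              Finset.abs_sum_le_sum_abs _ _
          _ ≤ ψ2 ℓ := by
              rw [hψ2def]
              apply Finset.sum_le_sum
              intro i _
              have h1 : |c ℓ i * u ℓ i * ρ i| = c ℓ i * |u ℓ i| * |ρ i| := by
                rw [abs_mul, abs_mul, abs_of_pos (hcpos ℓ i)]
              rw [h1]
              have h3 : 0 ≤ c ℓ i * |ρ i| := mul_nonneg (hcpos ℓ i).le (abs_nonneg _)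
              calc c ℓ i * |u ℓ i| * |ρ i| = (c ℓ i * |ρ i|) * |u ℓ i| := by ring
                _ ≤ (c ℓ i * |ρ i|) * M i := mul_le_mul_of_nonneg_left (hM ℓ i) h3
      have hfrac : ((1:ℝ)/n) ≤ 1 := by
        rw [div_le_one hnpos]; exact hn1
      have h0 : 0 ≤ |∑ i, c ℓ i * u ℓ i * ρ i| := abs_nonneg _
      have h1 : -(((1:ℝ)/n) * (∑ i, c ℓ i * u ℓ i * ρ i))
          ≤ ((1:ℝ)/n) * |∑ i, c ℓ i * u ℓ i * ρ i| := by
        rw [← mul_neg]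
        apply mul_le_mul_of_nonneg_left _ (by positivity)
        exact neg_le_abs _
      have h2 : ((1:ℝ)/n) * |∑ i, c ℓ i * u ℓ i * ρ i|
          ≤ |∑ i, c ℓ i * u ℓ i * ρ i| := by
        nlinarith
      linarith
    linarith
  -- tendsto of the bounds
  have htc : ∀ j, Tendsto (fun ℓ => tseq ℓ j) atTop (nhds (s j)) :=
    fun j => (tendsto_pi_nhds.mp htend) j
  have hψ1lim : Tendsto ψ1 atTop (nhds 0) := by
    have h : Tendsto (fun ℓ => ∑ i, (b i) ^ 2 / 4 * q ℓ i) atTop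
        (nhds (∑ _i : Fin p, (0:ℝ))) := by
      apply tendsto_finset_sum
      intro i _
      rcases hs (g i) with h0 | h1
      · have hbi : b i = 0 := by
          rw [hb]
          refine dif_neg ?_
          rw [h0]; exact zero_ne_one
        have : (fun ℓ => (b i) ^ 2 / 4 * q ℓ i) = fun _ => (0:ℝ) := funext fun ℓ => by
          rw [hbi]; ring
        rw [this]
        exact tendsto_const_nhds
      · have ht2 : Tendsto (fun ℓ => tseq ℓ (g i) ^ 2) atTop (nhds (s (g i) ^ 2)) :=
          (htc (g i)).pow 2
        have hq' : Tendsto (fun ℓ => q ℓ i) atTop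
            (nhds ((1 - s (g i) ^ 2) / s (g i) ^ 2)) := by
          rw [hqdef]
          exact (tendsto_const_nhds.sub ht2).div ht2 (by rw [h1]; norm_num)
        have := hq'.const_mul ((b i) ^ 2 / 4)
        have hlim : (b i) ^ 2 / 4 * ((1 - s (g i) ^ 2) / s (g i) ^ 2) = 0 := by
          rw [h1]; norm_num
        rw [hlim] at this
        exact this
    simpa using h
  have hψ2lim : Tendsto ψ2 atTop (nhds 0) := by
    have h : Tendsto (fun ℓ => ∑ i, (c ℓ i * |ρ i|) * M i) atTop
        (nhds (∑ _i : Fin p, (0:ℝ))) := by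
      apply tendsto_finset_sum
      intro i _
      rcases hs (g i) with h0 | h1
      · have hc' : Tendsto (fun ℓ => c ℓ i) atTop
            (nhds (s (g i) ^ 2 / (1 - s (g i) ^ 2))) := by
          rw [hcdef]
          exact ((htc (g i)).pow 2).div (tendsto_const_nhds.sub ((htc (g i)).pow 2))
            (by rw [h0]; norm_num)
        have hlim : s (g i) ^ 2 / (1 - s (g i) ^ 2) = 0 := by rw [h0]; norm_num
        rw [hlim] at hc'
        have := (hc'.mul_const (|ρ i|)).mul_const (M i)
        simpa using this
      · have hρi : ρ i = 0 := hNE i h1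
        have : (fun ℓ => (c ℓ i * |ρ i|) * M i) = fun _ => (0:ℝ) :=
          funext fun ℓ => by rw [hρi]; simp
        rw [this]
        exact tendsto_const_nhds
    simpa using h
  -- squeeze
  have hw2 : Tendsto (fun ℓ => ∑ a, (w ℓ a) ^ 2) atTop (nhds 0) := by
    apply squeeze_zero (fun ℓ => Finset.sum_nonneg fun a _ => sq_nonneg _)
      (g := fun ℓ => (ψ1 ℓ + ψ2 ℓ) / n)
    · intro ℓ
      rw [le_div_iff₀ hnpos]
      linarith [hmain ℓ]
    · have := (hψ1lim.add hψ2lim).div_const (n:ℝ)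
      simpa using this
  have hwa : ∀ a, Tendsto (fun ℓ => w ℓ a) atTop (nhds 0) := by
    intro a
    have h2 : Tendsto (fun ℓ => (w ℓ a) ^ 2) atTop (nhds 0) :=
      squeeze_zero (fun ℓ => sq_nonneg _)
        (fun ℓ => Finset.single_le_sum (f := fun a' => (w ℓ a') ^ 2)
          (fun a' _ => sq_nonneg _) (Finset.mem_univ a)) hw2
    have habs : Tendsto (fun ℓ => |w ℓ a|) atTop (nhds 0) := by
      have h3 := (Real.continuous_sqrt.tendsto 0).comp h2
      rw [show ((fun x => Real.sqrt x) ∘ fun ℓ => (w ℓ a) ^ 2) = fun ℓ => |w ℓ a| from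
        funext fun ℓ => Real.sqrt_sq_eq_abs _] at h3
      simpa using h3
    have hneg : Tendsto (fun ℓ => -|w ℓ a|) atTop (nhds 0) := by
      simpa using habs.neg
    exact tendsto_of_tendsto_of_tendsto_of_le_of_le hneg habs
      (fun ℓ => neg_abs_le _) (fun ℓ => le_abs_self _)
  -- conclude
  have hfit : ∀ ℓ, (X * Tmat g (tseq ℓ)) *ᵥ betaT X g y (tseq ℓ)
      = y - (n:ℝ) • z ℓ := by
    intro ℓ
    rw [fitted_eq hn X g y (tseq ℓ) (htseq ℓ) (hL _ (htseq ℓ))]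
  refine Filter.Tendsto.congr (fun ℓ => (hfit ℓ).symm) ?_
  rw [tendsto_pi_nhds]
  intro a
  have hcoord : ∀ ℓ, (y - (n:ℝ) • z ℓ) a = y a - ((n:ℝ) * w ℓ a + r a) := by
    intro ℓ
    have hwz : w ℓ a = z ℓ a - ((1:ℝ)/n) * r a := by rw [hwdef]; rfl
    simp only [Pi.sub_apply, Pi.smul_apply, smul_eq_mul]
    rw [hwz]
    field_simp
    ring
  have htgt : (A *ᵥ βhat) a = y a - ((n:ℝ) * 0 + r a) := by
    rw [hra a]; ring
  rw [htgt]
  refine Filter.Tendsto.congr (fun ℓ => (hcoord ℓ).symm) ?_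
  exact tendsto_const_nhds.sub (((hwa a).const_mul _).add_const _)
end
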